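/- arXiv:2306.00619 — 2 statements merged into one kernel-verified Lean document; each statement's English description precedes it below -/
import Mathlib

section
/- Suppose B_f is irreducible. Then for every z ∈ 𝐃 the Jacobian matrix J(z) of the vector field G at z is an irreducible Metzler matrix: every off-diagonal entry of J(z) is nonnegative, and the directed graph on {1,…,n+m} with an edge from i to j whenever i ≠ j and J(z)_{ij} > 0 is strongly connected. (In particular, the higher-order SIWS model is an irreducible monotone system on 𝐃.) -/
/-! Off the diagonal, the entry `J(z)_ij` is read off from the quadratic polynomial
`t ↦ G(z + t e_j)_i`: it equals `(1 - Z(z)_ii) (B_f,ij + ∂_j H_i(z))`, the `D_f` term vanishing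
since `D_f` is diagonal. On `𝐃` the factor `1 - Z(z)_ii` is positive and `∂_j H_i(z) ≥ 0`, so
`J(z)` is Metzler and `J(z)_ij > 0` wherever `B_f,ij > 0`. Every path of positive entries of
`B_f`, with its self-loops removed, is then such a path for `J(z)`. -/

open Matrix Filter Topology MeasureTheory

noncomputable section

/-- `Z(z) = diag(z_1,…,z_n,0,…,0)`. -/
def Zmat (n : ℕ) {N : ℕ} (z : Fin N → ℝ) : Matrix (Fin N) (Fin N) ℝ :=
  Matrix.diagonal fun i => if (i : ℕ) < n then z i else 0

/-- `H(z)_i = zᵀ B_{fi} z`. -/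
def Hquad {N : ℕ} (Bfi : Fin N → Matrix (Fin N) (Fin N) ℝ) (z : Fin N → ℝ) : Fin N → ℝ :=
  fun i => z ⬝ᵥ (Bfi i).mulVec z

/-- The higher-order SIWS vector field `G(z) = -D_f z + (I - Z(z)) (B_f z + H(z))`. -/
def Gfield (n : ℕ) {N : ℕ} (Df Bf : Matrix (Fin N) (Fin N) ℝ)
    (Bfi : Fin N → Matrix (Fin N) (Fin N) ℝ) (z : Fin N → ℝ) : Fin N → ℝ :=
  -(Df.mulVec z) + (1 - Zmat n z).mulVec (Bf.mulVec z + Hquad Bfi z)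

/-- Upper bound vector: `1` on the first `n` coordinates, `w_{j,max}` on the rest. -/
def ubound (n : ℕ) {N : ℕ} (Df Bf : Matrix (Fin N) (Fin N) ℝ)
    (Bfi : Fin N → Matrix (Fin N) (Fin N) ℝ) (i : Fin N) : ℝ :=
  if (i : ℕ) < n then 1 else (∑ q, Bf i q + ∑ p, ∑ q, Bfi i p q) / Df i i

/-- The closed domain `D̄`. -/
def Dbar (n : ℕ) {N : ℕ} (Df Bf : Matrix (Fin N) (Fin N) ℝ)
    (Bfi : Fin N → Matrix (Fin N) (Fin N) ℝ) : Set (Fin N → ℝ) :=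
  {z | ∀ i, 0 ≤ z i ∧ z i ≤ ubound n Df Bf Bfi i}

/-- The open domain `𝐃`. -/
def Dint (n : ℕ) {N : ℕ} (Df Bf : Matrix (Fin N) (Fin N) ℝ)
    (Bfi : Fin N → Matrix (Fin N) (Fin N) ℝ) : Set (Fin N → ℝ) :=
  {z | ∀ i, 0 < z i ∧ z i < ubound n Df Bf Bfi i}

/-- A solution of `z' = G(z)` on `[0,∞)`. -/
def IsSolution {N : ℕ} (G : (Fin N → ℝ) → (Fin N → ℝ)) (z : ℝ → Fin N → ℝ) : Prop :=
  ∀ t : ℝ, 0 ≤ t → HasDerivAt z (G (z t)) t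

/-- Irreducibility of a (nonnegative) square matrix. -/
def Irred {N : ℕ} (M : Matrix (Fin N) (Fin N) ℝ) : Prop :=
  ∀ i j : Fin N, i ≠ j → ∃ (r : ℕ) (k : ℕ → Fin N),
    k 0 = i ∧ k r = j ∧ ∀ s, s < r → 0 < M (k s) (k (s + 1))

/-- Spectral radius: maximum modulus of the complex eigenvalues. -/
def specRad {N : ℕ} (M : Matrix (Fin N) (Fin N) ℝ) : ℝ :=
  sSup {r : ℝ | ∃ μ : ℂ, (M.map fun x : ℝ => (x : ℂ)).charpoly.IsRoot μ ∧ r = ‖μ‖}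

/-- Spectral abscissa: maximum real part of the complex eigenvalues. -/
def specAbs {N : ℕ} (M : Matrix (Fin N) (Fin N) ℝ) : ℝ :=
  sSup {r : ℝ | ∃ μ : ℂ, (M.map fun x : ℝ => (x : ℂ)).charpoly.IsRoot μ ∧ r = μ.re}

/-- A matrix is Hurwitz if every eigenvalue has negative real part. -/
def IsHurwitz {N : ℕ} (M : Matrix (Fin N) (Fin N) ℝ) : Prop :=
  ∀ μ : ℂ, (M.map fun x : ℝ => (x : ℂ)).charpoly.IsRoot μ → μ.re < 0

/-- Euclidean norm on `ℝ^N`. -/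
def eucNorm {N : ℕ} (v : Fin N → ℝ) : ℝ := Real.sqrt (∑ i, v i ^ 2)

/-- Euclidean norm on a pair of vectors (concatenation). -/
def eucNorm2 {N : ℕ} (v w : Fin N → ℝ) : ℝ := Real.sqrt (∑ i, v i ^ 2 + ∑ i, w i ^ 2)

/-- Jacobian matrix of a vector field at a point. -/
def jacobian {N : ℕ} (G : (Fin N → ℝ) → (Fin N → ℝ)) (z : Fin N → ℝ) :
    Matrix (Fin N) (Fin N) ℝ :=
  Matrix.of fun i j => fderiv ℝ G z (Pi.single j 1) i

/-- Structural hypotheses of the higher-order SIWS model. -/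
structure ModelHyp (n : ℕ) {N : ℕ} (Df Bf : Matrix (Fin N) (Fin N) ℝ)
    (Bfi : Fin N → Matrix (Fin N) (Fin N) ℝ) : Prop where
  dDiag : ∀ i j, i ≠ j → Df i j = 0
  dPos : ∀ i, 0 < Df i i
  bNonneg : ∀ p q, 0 ≤ Bf p q
  bBlock : ∀ p q : Fin N, n ≤ (p : ℕ) → n ≤ (q : ℕ) → Bf p q = 0
  bfiNonneg : ∀ i p q, 0 ≤ Bfi i p q
  bfiBlock1 : ∀ i : Fin N, (i : ℕ) < n → ∀ p q : Fin N, n ≤ (p : ℕ) → n ≤ (q : ℕ) →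
    Bfi i p q = 0
  bfiBlock2 : ∀ i : Fin N, n ≤ (i : ℕ) → ∀ p q : Fin N, ¬((p : ℕ) < n ∧ (q : ℕ) < n) →
    Bfi i p q = 0

/-- Bi-virus vector field for one virus:
`G^ν(z, zo) = -D_f^ν z + (I - Z(z) - Z(zo)) (B_f^ν z + H^ν(z))`. -/
def GBi (n : ℕ) {N : ℕ} (Df Bf : Matrix (Fin N) (Fin N) ℝ)
    (Bfi : Fin N → Matrix (Fin N) (Fin N) ℝ) (z zo : Fin N → ℝ) : Fin N → ℝ :=
  -(Df.mulVec z) + (1 - Zmat n z - Zmat n zo).mulVec (Bf.mulVec z + Hquad Bfi z)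

/-- A solution of the bi-virus dynamics on `[0,∞)`. -/
def IsSolutionBi (n : ℕ) {N : ℕ} (Df1 Bf1 : Matrix (Fin N) (Fin N) ℝ)
    (Bfi1 : Fin N → Matrix (Fin N) (Fin N) ℝ) (Df2 Bf2 : Matrix (Fin N) (Fin N) ℝ)
    (Bfi2 : Fin N → Matrix (Fin N) (Fin N) ℝ) (z1 z2 : ℝ → Fin N → ℝ) : Prop :=
  ∀ t : ℝ, 0 ≤ t →
    HasDerivAt z1 (GBi n Df1 Bf1 Bfi1 (z1 t) (z2 t)) t ∧
    HasDerivAt z2 (GBi n Df2 Bf2 Bfi2 (z2 t) (z1 t)) t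

/-- Membership in the bi-virus domain `D̄_bi`. -/
def InDbarBi (n : ℕ) {N : ℕ} (Df1 Bf1 : Matrix (Fin N) (Fin N) ℝ)
    (Bfi1 : Fin N → Matrix (Fin N) (Fin N) ℝ) (Df2 Bf2 : Matrix (Fin N) (Fin N) ℝ)
    (Bfi2 : Fin N → Matrix (Fin N) (Fin N) ℝ) (z1 z2 : Fin N → ℝ) : Prop :=
  z1 ∈ Dbar n Df1 Bf1 Bfi1 ∧ z2 ∈ Dbar n Df2 Bf2 Bfi2 ∧
    ∀ i : Fin N, (i : ℕ) < n → z1 i + z2 i ≤ 1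

/-- The vector `𝟙` : first `n` coordinates equal `1`, the rest `0`. -/
def onevec (n : ℕ) {N : ℕ} : Fin N → ℝ := fun i => if (i : ℕ) < n then 1 else 0

/-- The general SIWS vector field. -/
def Ggen (n : ℕ) {N : ℕ} (Df : Matrix (Fin N) (Fin N) ℝ)
    (F H : (Fin N → ℝ) → (Fin N → ℝ)) (z : Fin N → ℝ) : Fin N → ℝ := fun i =>
  if (i : ℕ) < n then -(Df i i * z i) + (1 - z i) * (F z i + H z i)
  else -(Df i i * z i) + (F z i + H z i)

/-- Upper bound vector for the general SIWS model. -/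
def uboundGen (n : ℕ) {N : ℕ} (Df : Matrix (Fin N) (Fin N) ℝ)
    (F H : (Fin N → ℝ) → (Fin N → ℝ)) (i : Fin N) : ℝ :=
  if (i : ℕ) < n then 1 else (F (onevec n) i + H (onevec n) i) / Df i i

def DbarGen (n : ℕ) {N : ℕ} (Df : Matrix (Fin N) (Fin N) ℝ)
    (F H : (Fin N → ℝ) → (Fin N → ℝ)) : Set (Fin N → ℝ) :=
  {z | ∀ i, 0 ≤ z i ∧ z i ≤ uboundGen n Df F H i}

def DintGen (n : ℕ) {N : ℕ} (Df : Matrix (Fin N) (Fin N) ℝ)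
    (F H : (Fin N → ℝ) → (Fin N → ℝ)) : Set (Fin N → ℝ) :=
  {z | ∀ i, 0 < z i ∧ z i < uboundGen n Df F H i}

/-- Structural hypotheses of the general SIWS model. -/
structure GenHyp (n : ℕ) {N : ℕ} (Df : Matrix (Fin N) (Fin N) ℝ)
    (F H : (Fin N → ℝ) → (Fin N → ℝ)) : Prop where
  dDiag : ∀ i j, i ≠ j → Df i j = 0
  dPos : ∀ i, 0 < Df i i
  fSmooth : ContDiff ℝ 1 F
  hSmooth : ContDiff ℝ 1 H
  fZero : F 0 = 0
  hZero : H 0 = 0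
  fDep : ∀ i : Fin N, n ≤ (i : ℕ) → ∀ z z' : Fin N → ℝ,
    (∀ j : Fin N, (j : ℕ) < n → z j = z' j) → F z i = F z' i
  hDep : ∀ i : Fin N, n ≤ (i : ℕ) → ∀ z z' : Fin N → ℝ,
    (∀ j : Fin N, (j : ℕ) < n → z j = z' j) → H z i = H z' i
  fMono : ∀ (z : Fin N → ℝ) (i j : Fin N), 0 ≤ fderiv ℝ F z (Pi.single j 1) i
  hMono : ∀ (z : Fin N → ℝ) (i j : Fin N), 0 ≤ fderiv ℝ H z (Pi.single j 1) i
  hJacZero : fderiv ℝ H 0 = 0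
  edgeHyp : ∃ E : Set (Fin N × Fin N),
    (∀ e ∈ E, e.1 ≠ e.2) ∧
    (∀ i j : Fin N, i ≠ j → ∃ (r : ℕ) (k : ℕ → Fin N),
      k 0 = i ∧ k r = j ∧ ∀ s, s < r → (k s, k (s + 1)) ∈ E) ∧
    (∀ (z : Fin N → ℝ), ∀ e ∈ E, 0 < fderiv ℝ F z (Pi.single e.2 1) e.1)

/-- The perturbed SIWS vector field `G_ε(z) = -D_f z + (I - Z(z)) (B_f z + ε H(z))`. -/
def Gpert (n : ℕ) {N : ℕ} (Df Bf : Matrix (Fin N) (Fin N) ℝ)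
    (H : (Fin N → ℝ) → (Fin N → ℝ)) (ε : ℝ) (z : Fin N → ℝ) : Fin N → ℝ :=
  -(Df.mulVec z) + (1 - Zmat n z).mulVec (Bf.mulVec z + ε • H z)

open Relation

theorem exists_path_iff_reflTransGen {α : Type*} {R : α → α → Prop} {a b : α} :
    (∃ (r : ℕ) (k : ℕ → α), k 0 = a ∧ k r = b ∧ ∀ s, s < r → R (k s) (k (s + 1))) ↔
      ReflTransGen R a b := by
  constructor
  · rintro ⟨r, k, rfl, rfl, hk⟩
    induction r with
    | zero => rfl
    | succ r ih => exact (ih fun s hs => hk s (by omega)).tail (hk r (by omega))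
  · intro h
    induction h with
    | refl => exact ⟨0, fun _ => a, rfl, rfl, by simp⟩
    | @tail b c _ hbc ih =>
      obtain ⟨r, k, hk0, hkr, hk⟩ := ih
      refine ⟨r + 1, fun s => if s ≤ r then k s else c, by simp [hk0], by simp, fun s hs => ?_⟩
      rcases Nat.lt_or_eq_of_le (Nat.lt_succ_iff.1 hs) with hs | rfl
      · simpa [hs.le, Nat.succ_le_of_lt hs] using hk s hs
      · simpa [hkr] using hbc

theorem Irred.exists_path_of_pos_imp_pos {N : ℕ} {M J : Matrix (Fin N) (Fin N) ℝ} (hM : Irred M)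
    (hMJ : ∀ a b, a ≠ b → 0 < M a b → 0 < J a b) {i j : Fin N} (hij : i ≠ j) :
    ∃ (r : ℕ) (k : ℕ → Fin N), k 0 = i ∧ k r = j ∧ ∀ s, s < r →
      k s ≠ k (s + 1) ∧ 0 < J (k s) (k (s + 1)) := by
  have hpath : ReflTransGen (fun a b => 0 < M a b) i j :=
    exists_path_iff_reflTransGen.1 (hM i j hij)
  refine exists_path_iff_reflTransGen (R := fun a b => a ≠ b ∧ 0 < J a b) |>.2 ?_
  refine reflTransGen_closed (fun a b hab => ?_) i j hpath
  rcases eq_or_ne a b with rfl | hne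
  · rfl
  · exact ReflTransGen.single ⟨hne, hMJ a b hne hab⟩

theorem jacobian_apply_eq_deriv {N : ℕ} {G : (Fin N → ℝ) → Fin N → ℝ} {z : Fin N → ℝ}
    (hG : DifferentiableAt ℝ G z) (i j : Fin N) :
    jacobian G z i j = deriv (fun t : ℝ => G (z + t • Pi.single j 1) i) 0 := by
  have hline : HasDerivAt (fun t : ℝ => z + t • Pi.single j (1 : ℝ)) (Pi.single j 1) 0 := by
    simpa using ((hasDerivAt_id (0 : ℝ)).smul_const (Pi.single j (1 : ℝ))).const_add z
  have hcomp := hG.hasFDerivAt.comp_hasDerivAt_of_eq 0 hline (by simp)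
  exact (hasDerivAt_pi.1 hcomp i).deriv.symm

section SIWS

variable (n : ℕ) {N : ℕ} (Df Bf : Matrix (Fin N) (Fin N) ℝ)
  (Bfi : Fin N → Matrix (Fin N) (Fin N) ℝ)

theorem one_sub_Zmat (z : Fin N → ℝ) :
    1 - Zmat n z = diagonal fun i : Fin N => 1 - if (i : ℕ) < n then z i else 0 := by
  rw [Zmat, ← diagonal_one, diagonal_sub]

theorem Hquad_add_smul (z v : Fin N → ℝ) (t : ℝ) (i : Fin N) :
    Hquad Bfi (z + t • v) i =
      Hquad Bfi z i + t * ((Bfi i *ᵥ z) ⬝ᵥ v + (z ᵥ* Bfi i) ⬝ᵥ v) + t ^ 2 * Hquad Bfi v i := by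
  simp only [Hquad, mulVec_add, mulVec_smul, add_dotProduct, dotProduct_add, smul_dotProduct,
    dotProduct_smul, smul_eq_mul, dotProduct_comm v (Bfi i *ᵥ z), dotProduct_mulVec z]
  ring

theorem Gfield_apply (z : Fin N → ℝ) (i : Fin N) :
    Gfield n Df Bf Bfi z i =
      -(Df *ᵥ z) i + (1 - if (i : ℕ) < n then z i else 0) * ((Bf *ᵥ z) i + Hquad Bfi z i) := by
  simp only [Gfield, one_sub_Zmat, mulVec_diagonal, Pi.add_apply, Pi.neg_apply]

theorem differentiable_Gfield : Differentiable ℝ (Gfield n Df Bf Bfi) := by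
  refine differentiable_pi.2 fun i => ?_
  simp only [Gfield_apply, Hquad, mulVec, dotProduct]
  split_ifs <;> fun_prop

theorem hasDerivAt_Gfield_line {i j : Fin N} (hij : i ≠ j) (z : Fin N → ℝ) :
    HasDerivAt (fun t : ℝ => Gfield n Df Bf Bfi (z + t • Pi.single j 1) i)
      (-Df i j + (1 - if (i : ℕ) < n then z i else 0) *
        (Bf i j + ((Bfi i *ᵥ z) j + (z ᵥ* Bfi i) j))) 0 := by
  set c := 1 - if (i : ℕ) < n then z i else 0
  set J := -Df i j + c * (Bf i j + ((Bfi i *ᵥ z) j + (z ᵥ* Bfi i) j))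
  have hpoly : (fun t : ℝ => Gfield n Df Bf Bfi (z + t • Pi.single j 1) i) =
      fun t => Gfield n Df Bf Bfi z i + t * J + t ^ 2 * (c * Hquad Bfi (Pi.single j 1) i) := by
    funext t
    simp only [Gfield_apply, Hquad_add_smul, mulVec_add, mulVec_smul, mulVec_single_one,
      Pi.add_apply, Pi.smul_apply, smul_eq_mul, col_apply, dotProduct_single_one,
      Pi.single_eq_of_ne hij, mul_zero, add_zero, c, J]
    ring
  rw [hpoly]
  refine ((((hasDerivAt_id (0 : ℝ)).mul_const J).const_add (Gfield n Df Bf Bfi z i)).add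
    ((hasDerivAt_pow 2 (0 : ℝ)).mul_const (c * Hquad Bfi (Pi.single j 1) i))).congr_deriv ?_
  simp

theorem jacobian_Gfield_of_ne {i j : Fin N} (hij : i ≠ j) (z : Fin N → ℝ) :
    jacobian (Gfield n Df Bf Bfi) z i j =
      -Df i j + (1 - if (i : ℕ) < n then z i else 0) *
        (Bf i j + ((Bfi i *ᵥ z) j + (z ᵥ* Bfi i) j)) :=
  (jacobian_apply_eq_deriv (differentiable_Gfield n Df Bf Bfi).differentiableAt i j).trans
    (hasDerivAt_Gfield_line n Df Bf Bfi hij z).deriv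

variable {n Df Bf Bfi} {z : Fin N → ℝ} {i j : Fin N}

theorem ModelHyp.jacobian_Gfield_eq_mul (hmod : ModelHyp n Df Bf Bfi) (hz : z ∈ Dint n Df Bf Bfi)
    (hij : i ≠ j) :
    ∃ c h : ℝ, 0 < c ∧ 0 ≤ h ∧ jacobian (Gfield n Df Bf Bfi) z i j = c * (Bf i j + h) := by
  refine ⟨_, _, ?_, ?_, by
    rw [jacobian_Gfield_of_ne n Df Bf Bfi hij z, hmod.dDiag i j hij, neg_zero, zero_add]⟩
  · split_ifs with hi
    · have := (hz i).2
      rw [ubound, if_pos hi] at this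
      linarith
    · norm_num
  · have hz0 : 0 ≤ z := fun p => (hz p).1.le
    exact add_nonneg (dotProduct_nonneg_of_nonneg (hmod.bfiNonneg i j) hz0)
      (dotProduct_nonneg_of_nonneg hz0 fun p => hmod.bfiNonneg i p j)

theorem ModelHyp.jacobian_Gfield_nonneg (hmod : ModelHyp n Df Bf Bfi)
    (hz : z ∈ Dint n Df Bf Bfi) (hij : i ≠ j) : 0 ≤ jacobian (Gfield n Df Bf Bfi) z i j := by
  obtain ⟨c, h, hc, hh, hJ⟩ := hmod.jacobian_Gfield_eq_mul hz hij
  exact hJ ▸ mul_nonneg hc.le (add_nonneg (hmod.bNonneg i j) hh)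

theorem ModelHyp.jacobian_Gfield_pos (hmod : ModelHyp n Df Bf Bfi) (hz : z ∈ Dint n Df Bf Bfi)
    (hij : i ≠ j) (hB : 0 < Bf i j) : 0 < jacobian (Gfield n Df Bf Bfi) z i j := by
  obtain ⟨c, h, hc, hh, hJ⟩ := hmod.jacobian_Gfield_eq_mul hz hij
  exact hJ ▸ mul_pos hc (add_pos_of_pos_of_nonneg hB hh)

end SIWS

theorem stmt8_general (n m : ℕ)
    (Df Bf : Matrix (Fin (n + m)) (Fin (n + m)) ℝ)
    (Bfi : Fin (n + m) → Matrix (Fin (n + m)) (Fin (n + m)) ℝ)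
    (hmod : ModelHyp n Df Bf Bfi) (hirr : Irred Bf) :
    ∀ z ∈ Dint n Df Bf Bfi,
      (∀ i j : Fin (n + m), i ≠ j → 0 ≤ jacobian (Gfield n Df Bf Bfi) z i j) ∧
      (∀ i j : Fin (n + m), i ≠ j → ∃ (r : ℕ) (k : ℕ → Fin (n + m)),
        k 0 = i ∧ k r = j ∧ ∀ s, s < r →
          k s ≠ k (s + 1) ∧ 0 < jacobian (Gfield n Df Bf Bfi) z (k s) (k (s + 1))) :=
  fun _ hz => ⟨fun _ _ hij => hmod.jacobian_Gfield_nonneg hz hij,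
    fun _ _ => hirr.exists_path_of_pos_imp_pos fun _ _ hab => hmod.jacobian_Gfield_pos hz hab⟩

/-- at every point of `𝐃` the Jacobian of `G` is an irreducible
Metzler matrix. -/
theorem stmt8 (n m : ℕ) (hn : 0 < n)
    (Df Bf : Matrix (Fin (n + m)) (Fin (n + m)) ℝ)
    (Bfi : Fin (n + m) → Matrix (Fin (n + m)) (Fin (n + m)) ℝ)
    (hmod : ModelHyp n Df Bf Bfi) (hirr : Irred Bf) :
    ∀ z ∈ Dint n Df Bf Bfi,
      (∀ i j : Fin (n + m), i ≠ j → 0 ≤ jacobian (Gfield n Df Bf Bfi) z i j) ∧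
      (∀ i j : Fin (n + m), i ≠ j → ∃ (r : ℕ) (k : ℕ → Fin (n + m)),
        k 0 = i ∧ k r = j ∧ ∀ s, s < r →
          k s ≠ k (s + 1) ∧ 0 < jacobian (Gfield n Df Bf Bfi) z (k s) (k (s + 1))) :=
  stmt8_general n m Df Bf Bfi hmod hirr
end
end

section
/- Consider the bi-virus higher-order SIWS model. Then: (i) every solution with (z^1(0), z^2(0)) ∈ D̄_bi satisfies (z^1(t), z^2(t)) ∈ D̄_bi for all t ≥ 0; (ii) (0,0) is an equilibrium; (iii) for each ν ∈ {1,2}, if (z^1, z^2) is a solution with (z^1(0), z^2(0)) ∈ D̄_bi and ẑ : [0,∞) → ℝ^{n+m} is a solution of the single-virus counterpart of virus ν with ẑ(0) = z^ν(0), then z^ν(t) ≤ ẑ(t) componentwise for all t ≥ 0. -/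
open Matrix Filter Topology MeasureTheory

noncomputable section

/-!
Each constraint cutting out `D̄_bi`, and each comparison `z^ν_i ≤ ẑ_i`, is a scalar function
`g_k(t)` with `g_k(0) ≤ 0`. On `[0, T]` the trajectory is bounded, so the infection term
`B_f z + H(z)` is Lipschitz there; together with the inward-pointing sign of the field on the
boundary of `D̄_bi`, this gives `g_k' ≤ C s` whenever `g_k > 0` and all constraints hold up to a
slack `s`. The penalty `V = ∑ₖ (max g_k 0)²` is `C¹`, vanishes at `0` and, by Cauchy–Schwarz,
satisfies `V' ≤ L V`; so `V ≡ 0` by Grönwall's inequality.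
-/

open Finset

theorem hasDerivAt_max_zero_sq (x : ℝ) :
    HasDerivAt (fun y : ℝ => max y 0 ^ 2) (2 * max x 0) x := by
  rcases lt_trichotomy x 0 with hx | rfl | hx
  · rw [max_eq_right hx.le, mul_zero]
    refine (hasDerivAt_const x (0 : ℝ)).congr_of_eventuallyEq ?_
    filter_upwards [Iio_mem_nhds hx] with y hy
    simp [max_eq_right (le_of_lt (Set.mem_Iio.mp hy))]
  · rw [hasDerivAt_iff_isLittleO_nhds_zero]
    refine ((Asymptotics.isBigO_of_le _ fun h => ?_).trans_isLittleO
      (Asymptotics.isLittleO_pow_id one_lt_two))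
    simp only [zero_add, max_self, zero_pow two_ne_zero, sub_zero, mul_zero, smul_zero,
      norm_pow, Real.norm_eq_abs]
    exact pow_le_pow_left₀ (abs_nonneg _) (abs_max_le_max_abs_abs.trans (by simp)) 2
  · rw [max_eq_left hx.le]
    refine (hasDerivAt_pow 2 x).congr_of_eventuallyEq ?_ |>.congr_deriv (by ring)
    filter_upwards [Ioi_mem_nhds hx] with y hy
    simp [max_eq_left (le_of_lt (Set.mem_Ioi.mp hy))]

theorem sum_mul_max_zero_le_of_slope {ι : Type*} [Fintype ι] {a a' : ι → ℝ} {C : ℝ}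
    (hslope : ∀ s, 0 ≤ s → (∀ j, a j ≤ s) → ∀ k, 0 < a k → a' k ≤ C * s) :
    ∑ j, 2 * max (a j) 0 * a' j ≤ 2 * |C| * Fintype.card ι * ∑ j, max (a j) 0 ^ 2 := by
  set s := ∑ j, max (a j) 0
  have hs : 0 ≤ s := sum_nonneg fun j _ => le_max_right _ _
  have has : ∀ j, a j ≤ s := fun j => (le_max_left _ _).trans
    (single_le_sum (f := fun j => max (a j) 0) (fun j _ => le_max_right _ _) (mem_univ j))
  have hterm : ∀ j, 2 * max (a j) 0 * a' j ≤ 2 * |C| * s * max (a j) 0 := by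
    intro j
    rcases le_or_gt (a j) 0 with hj | hj
    · simp [max_eq_right hj]
    · rw [max_eq_left hj.le]
      have := hslope s hs has j hj
      nlinarith [mul_le_mul_of_nonneg_right (le_abs_self C) hs]
  calc ∑ j, 2 * max (a j) 0 * a' j ≤ ∑ j, 2 * |C| * s * max (a j) 0 :=
        sum_le_sum fun j _ => hterm j
    _ = 2 * |C| * s ^ 2 := by rw [← mul_sum]; ring
    _ ≤ 2 * |C| * (Fintype.card ι * ∑ j, max (a j) 0 ^ 2) := by
        gcongr; exact sq_sum_le_card_mul_sum_sq
    _ = _ := by ring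

theorem nonpos_of_hasDerivAt_of_slope {ι : Type*} [Fintype ι] {g g' : ι → ℝ → ℝ}
    (hg : ∀ k t, 0 ≤ t → HasDerivAt (g k) (g' k t) t) (h0 : ∀ k, g k 0 ≤ 0)
    (hslope : ∀ T, ∃ C, ∀ t ∈ Set.Icc 0 T, ∀ s, 0 ≤ s → (∀ j, g j t ≤ s) →
      ∀ k, 0 < g k t → g' k t ≤ C * s) :
    ∀ t, 0 ≤ t → ∀ k, g k t ≤ 0 := by
  intro T hT k
  obtain ⟨C, hC⟩ := hslope T
  set V : ℝ → ℝ := fun t => ∑ j, max (g j t) 0 ^ 2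
  have hV : ∀ t, 0 ≤ t → HasDerivAt V (∑ j, 2 * max (g j t) 0 * g' j t) t := fun t ht =>
    HasDerivAt.fun_sum fun j _ => (hasDerivAt_max_zero_sq _).comp t (hg j t ht)
  have hVT : V T ≤ 0 := by
    have := le_gronwallBound_of_liminf_deriv_right_le (δ := 0) (ε := 0)
      (fun t ht => (hV t ht.1).continuousAt.continuousWithinAt)
      (fun t ht r hr => (hV t ht.1).hasDerivWithinAt.liminf_right_slope_le hr)
      (by simp [V, max_eq_right (h0 _)])
      (fun t ht => by simpa using sum_mul_max_zero_le_of_slope (hC t (Set.Ico_subset_Icc_self ht)))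
      T ⟨hT, le_rfl⟩
    rwa [gronwallBound_ε0_δ0] at this
  have hk : max (g k T) 0 ^ 2 ≤ 0 := (single_le_sum (f := fun j => max (g j T) 0 ^ 2)
    (fun j _ => sq_nonneg _) (mem_univ k)).trans hVT
  nlinarith [le_max_left (g k T) 0, le_max_right (g k T) 0]

section Infection

variable {n N : ℕ} {B : Matrix (Fin N) (Fin N) ℝ} {Bi : Fin N → Matrix (Fin N) (Fin N) ℝ}

def infection (B : Matrix (Fin N) (Fin N) ℝ) (Bi : Fin N → Matrix (Fin N) (Fin N) ℝ)
    (x : Fin N → ℝ) : Fin N → ℝ :=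
  B *ᵥ x + Hquad Bi x

theorem infection_apply (x : Fin N → ℝ) (i : Fin N) :
    infection B Bi x i = ∑ q, B i q * x q + ∑ p, ∑ q, Bi i p q * (x p * x q) := by
  simp only [infection, Hquad, Pi.add_apply, mulVec, dotProduct, mul_sum]
  congr 1
  exact sum_congr rfl fun p _ => sum_congr rfl fun q _ => by ring

theorem infection_one_apply (i : Fin N) :
    infection B Bi 1 i = ∑ q, B i q + ∑ p, ∑ q, Bi i p q := by
  simp [infection_apply]

theorem infection_zero : infection B Bi 0 = 0 := by
  ext i; simp [infection_apply]

theorem infection_mono (hB : ∀ p q, 0 ≤ B p q) (hBi : ∀ i p q, 0 ≤ Bi i p q)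
    {x y : Fin N → ℝ} (hx : 0 ≤ x) (hxy : x ≤ y) (i : Fin N) :
    infection B Bi x i ≤ infection B Bi y i := by
  simp only [infection_apply]
  have hy : 0 ≤ y := hx.trans hxy
  gcongr with q _ p _ q _
  all_goals first | exact hB i _ | exact hBi i _ _ | exact hxy _ | exact hx _ | exact hy _

theorem infection_nonneg (hB : ∀ p q, 0 ≤ B p q) (hBi : ∀ i p q, 0 ≤ Bi i p q)
    {x : Fin N → ℝ} (hx : 0 ≤ x) (i : Fin N) : 0 ≤ infection B Bi x i := by
  simpa [infection_zero] using infection_mono hB hBi le_rfl hx i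

theorem infection_one_nonneg (hB : ∀ p q, 0 ≤ B p q) (hBi : ∀ i p q, 0 ≤ Bi i p q) (i : Fin N) :
    0 ≤ infection B Bi 1 i :=
  infection_nonneg hB hBi zero_le_one i

theorem abs_infection_sub_le (hB : ∀ p q, 0 ≤ B p q) (hBi : ∀ i p q, 0 ≤ Bi i p q)
    (x y : Fin N → ℝ) (i : Fin N) :
    |infection B Bi x i - infection B Bi y i| ≤
      infection B Bi 1 i * (1 + ‖x‖ + ‖y‖) * ‖x - y‖ := by
  have hcoord : ∀ q, |x q - y q| ≤ ‖x - y‖ := fun q => norm_le_pi_norm (x - y) q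
  have hlin : |∑ q, B i q * x q - ∑ q, B i q * y q| ≤ (∑ q, B i q) * ‖x - y‖ := by
    rw [← sum_sub_distrib, sum_mul]
    refine (abs_sum_le_sum_abs _ _).trans (sum_le_sum fun q _ => ?_)
    rw [← mul_sub, abs_mul, abs_of_nonneg (hB i q)]
    exact mul_le_mul_of_nonneg_left (hcoord q) (hB i q)
  have hquad : |∑ p, ∑ q, Bi i p q * (x p * x q) - ∑ p, ∑ q, Bi i p q * (y p * y q)| ≤
      (∑ p, ∑ q, Bi i p q) * ((‖x‖ + ‖y‖) * ‖x - y‖) := by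
    rw [← sum_sub_distrib, sum_mul]
    refine (abs_sum_le_sum_abs _ _).trans (sum_le_sum fun p _ => ?_)
    rw [← sum_sub_distrib, sum_mul]
    refine (abs_sum_le_sum_abs _ _).trans (sum_le_sum fun q _ => ?_)
    rw [← mul_sub, abs_mul, abs_of_nonneg (hBi i p q)]
    refine mul_le_mul_of_nonneg_left ?_ (hBi i p q)
    have hxp : |x p| ≤ ‖x‖ := norm_le_pi_norm x p
    have hyq : |y q| ≤ ‖y‖ := norm_le_pi_norm y q
    calc |x p * x q - y p * y q| = |x p * (x q - y q) + (x p - y p) * y q| := by ring_nf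
      _ ≤ ‖x‖ * ‖x - y‖ + ‖x - y‖ * ‖y‖ := by
        refine (abs_add_le _ _).trans ?_
        rw [abs_mul, abs_mul]
        gcongr
        exacts [hcoord q, hcoord p]
      _ = (‖x‖ + ‖y‖) * ‖x - y‖ := by ring
  have hBsum : 0 ≤ ∑ q, B i q := sum_nonneg fun q _ => hB i q
  have hBisum : 0 ≤ ∑ p, ∑ q, Bi i p q := sum_nonneg fun p _ => sum_nonneg fun q _ => hBi i p q
  rw [infection_apply, infection_apply, infection_one_apply]
  calc _ ≤ |∑ q, B i q * x q - ∑ q, B i q * y q| +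
        |∑ p, ∑ q, Bi i p q * (x p * x q) - ∑ p, ∑ q, Bi i p q * (y p * y q)| :=
        (abs_add_le _ _).trans_eq' (by ring_nf)
    _ ≤ _ := by
      have := mul_nonneg (add_nonneg (norm_nonneg x) (norm_nonneg y)) (norm_nonneg (x - y))
      nlinarith [norm_nonneg (x - y), mul_nonneg hBsum this]

theorem infection_apply_congr (hB : ∀ p q : Fin N, n ≤ (p : ℕ) → n ≤ (q : ℕ) → B p q = 0)
    (hBi : ∀ i : Fin N, n ≤ (i : ℕ) → ∀ p q : Fin N, ¬((p : ℕ) < n ∧ (q : ℕ) < n) → Bi i p q = 0)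
    {x y : Fin N → ℝ} (hxy : ∀ q : Fin N, (q : ℕ) < n → x q = y q) {i : Fin N} (hi : n ≤ (i : ℕ)) :
    infection B Bi x i = infection B Bi y i := by
  simp only [infection_apply]
  congr 1
  · refine sum_congr rfl fun q _ => ?_
    rcases lt_or_ge (q : ℕ) n with hq | hq
    · rw [hxy q hq]
    · simp [hB i q hi hq]
  · refine sum_congr rfl fun p _ => sum_congr rfl fun q _ => ?_
    by_cases hpq : (p : ℕ) < n ∧ (q : ℕ) < n
    · rw [hxy p hpq.1, hxy q hpq.2]
    · simp [hBi i hi p q hpq]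

end Infection

section Field

variable {n N : ℕ} {D B : Matrix (Fin N) (Fin N) ℝ} {Bi : Fin N → Matrix (Fin N) (Fin N) ℝ}

theorem GBi_apply (hD : ∀ i j, i ≠ j → D i j = 0) (x xo : Fin N → ℝ) (i : Fin N) :
    GBi n D B Bi x xo i = -(D i i * x i) +
      (1 - if (i : ℕ) < n then x i + xo i else 0) * infection B Bi x i := by
  have hDx : D *ᵥ x = fun j => D j j * x j := by
    ext j
    rw [mulVec, dotProduct, sum_eq_single j (fun q _ hq => by simp [hD j q (Ne.symm hq)])
      (by simp)]
  simp only [GBi, Zmat, ← diagonal_one, diagonal_sub, Pi.add_apply, Pi.neg_apply, hDx,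
    mulVec_diagonal, infection]
  split_ifs <;> ring

theorem GBi_apply_of_lt (hD : ∀ i j, i ≠ j → D i j = 0) (x xo : Fin N → ℝ) {i : Fin N}
    (hi : (i : ℕ) < n) :
    GBi n D B Bi x xo i = -(D i i * x i) + (1 - x i - xo i) * infection B Bi x i := by
  rw [GBi_apply hD, if_pos hi, sub_add_eq_sub_sub]

theorem GBi_apply_of_le (hD : ∀ i j, i ≠ j → D i j = 0) (x xo : Fin N → ℝ) {i : Fin N}
    (hi : n ≤ (i : ℕ)) :
    GBi n D B Bi x xo i = -(D i i * x i) + infection B Bi x i := by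
  rw [GBi_apply hD, if_neg (not_lt.mpr hi), sub_zero, one_mul]

theorem GBi_zero_left (xo : Fin N → ℝ) : GBi n D B Bi 0 xo = 0 := by
  have : Hquad Bi 0 = 0 := funext fun i => by simp [Hquad]
  simp [GBi, this]

theorem Gfield_eq_GBi_zero (x : Fin N → ℝ) : Gfield n D B Bi x = GBi n D B Bi x 0 := by
  have : Zmat n (0 : Fin N → ℝ) = 0 := by ext a b; simp [Zmat, diagonal_apply]
  simp [Gfield, GBi, this]

theorem ubound_of_lt {i : Fin N} (hi : (i : ℕ) < n) : ubound n D B Bi i = 1 := if_pos hi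

theorem mul_ubound_of_le {i : Fin N} (hD : 0 < D i i) (hi : n ≤ (i : ℕ)) :
    D i i * ubound n D B Bi i = infection B Bi 1 i := by
  rw [ubound, if_neg (not_lt.mpr hi), infection_one_apply, mul_div_cancel₀ _ hD.ne']

theorem ModelHyp.ubound_nonneg (hmod : ModelHyp n D B Bi) (i : Fin N) :
    0 ≤ ubound n D B Bi i := by
  rcases lt_or_ge (i : ℕ) n with hi | hi
  · rw [ubound_of_lt hi]; exact zero_le_one
  · rw [ubound, if_neg (not_lt.mpr hi), ← infection_one_apply]
    exact div_nonneg (infection_one_nonneg hmod.bNonneg hmod.bfiNonneg i) (hmod.dPos i).le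

end Field

section InfectionBounds

variable {n N : ℕ} {B : Matrix (Fin N) (Fin N) ℝ} {Bi : Fin N → Matrix (Fin N) (Fin N) ℝ}

theorem abs_infection_le (hB : ∀ p q, 0 ≤ B p q) (hBi : ∀ i p q, 0 ≤ Bi i p q)
    (x : Fin N → ℝ) (i : Fin N) :
    |infection B Bi x i| ≤ infection B Bi 1 i * (1 + ‖x‖) * ‖x‖ := by
  simpa [infection_zero] using abs_infection_sub_le hB hBi x 0 i

theorem neg_le_infection (hB : ∀ p q, 0 ≤ B p q) (hBi : ∀ i p q, 0 ≤ Bi i p q)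
    {x : Fin N → ℝ} {s : ℝ} (hs : 0 ≤ s) (hx : ∀ q, -s ≤ x q) (i : Fin N) :
    -(infection B Bi 1 i * (1 + 2 * ‖x‖) * s) ≤ infection B Bi x i := by
  set xp : Fin N → ℝ := fun q => max (x q) 0
  have hxp : ‖xp‖ ≤ ‖x‖ := (pi_norm_le_iff_of_nonneg (norm_nonneg x)).2 fun q =>
    (abs_max_le_max_abs_abs.trans (by simp)).trans (norm_le_pi_norm x q)
  have hdist : ‖x - xp‖ ≤ s := (pi_norm_le_iff_of_nonneg hs).2 fun q => by
    simp only [xp, Pi.sub_apply, Real.norm_eq_abs]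
    rcases le_total (x q) 0 with h | h
    · rw [max_eq_right h, sub_zero, abs_of_nonpos h]; linarith [hx q]
    · rw [max_eq_left h, sub_self, abs_zero]; exact hs
  have hlip := abs_infection_sub_le hB hBi x xp i
  have hFp := infection_nonneg hB hBi (fun q => le_max_right (x q) 0) i
  have hF1 := infection_one_nonneg hB hBi i
  have : infection B Bi 1 i * (1 + ‖x‖ + ‖xp‖) * ‖x - xp‖ ≤
      infection B Bi 1 i * (1 + 2 * ‖x‖) * s := by
    gcongr infection B Bi 1 i * ?_ * ?_
    linarith
  linarith [neg_abs_le (infection B Bi x i - infection B Bi xp i)]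

theorem infection_sub_le (hB : ∀ p q, 0 ≤ B p q) (hBi : ∀ i p q, 0 ≤ Bi i p q)
    {x y : Fin N → ℝ} {s : ℝ} (hx : 0 ≤ x) (hs : 0 ≤ s)
    (hxy : ∀ q, x q - y q ≤ s) (i : Fin N) :
    infection B Bi x i - infection B Bi y i ≤
      infection B Bi 1 i * (1 + ‖x‖ + 2 * ‖y‖) * s := by
  have hsup : ‖x ⊔ y‖ ≤ ‖x‖ + ‖y‖ :=
    (pi_norm_le_iff_of_nonneg (by positivity)).2 fun q => by
      simp only [Pi.sup_apply, Real.norm_eq_abs, abs_of_nonneg (le_sup_of_le_left (hx q))]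
      exact sup_le (by linarith [(Real.le_norm_self _).trans (norm_le_pi_norm x q), norm_nonneg y])
        (by linarith [(Real.le_norm_self _).trans (norm_le_pi_norm y q), norm_nonneg x])
  have hdist : ‖x ⊔ y - y‖ ≤ s := (pi_norm_le_iff_of_nonneg hs).2 fun q => by
    simp only [Pi.sub_apply, Pi.sup_apply, Real.norm_eq_abs]
    rw [abs_of_nonneg (sub_nonneg.2 le_sup_right)]
    exact sub_le_iff_le_add.2 (sup_le (by linarith [hxy q]) (by linarith))
  have hmono := infection_mono hB hBi hx (le_sup_left : x ≤ x ⊔ y) i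
  have hlip := abs_infection_sub_le hB hBi (x ⊔ y) y i
  have hF1 := infection_one_nonneg hB hBi i
  have : infection B Bi 1 i * (1 + ‖x ⊔ y‖ + ‖y‖) * ‖x ⊔ y - y‖ ≤
      infection B Bi 1 i * (1 + ‖x‖ + 2 * ‖y‖) * s := by
    gcongr infection B Bi 1 i * ?_ * ?_
    linarith
  linarith [le_abs_self (infection B Bi (x ⊔ y) i - infection B Bi y i)]

theorem infection_le_of_le_one_add (hB : ∀ p q, 0 ≤ B p q) (hBi : ∀ i p q, 0 ≤ Bi i p q)
    (hBblock : ∀ p q : Fin N, n ≤ (p : ℕ) → n ≤ (q : ℕ) → B p q = 0)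
    (hBiblock : ∀ i : Fin N, n ≤ (i : ℕ) → ∀ p q : Fin N, ¬((p : ℕ) < n ∧ (q : ℕ) < n) →
      Bi i p q = 0)
    {x : Fin N → ℝ} {s : ℝ} (hs : 0 ≤ s)
    (hx : ∀ q : Fin N, (q : ℕ) < n → -s ≤ x q ∧ x q ≤ 1 + s) {i : Fin N} (hi : n ≤ (i : ℕ)) :
    infection B Bi x i ≤ infection B Bi 1 i + infection B Bi 1 i * (2 + ‖x‖) * s := by
  -- only the first `n` coordinates enter at `i ≥ n`; compare with their clamp to `[0, 1]`
  set xt : Fin N → ℝ := fun q => if (q : ℕ) < n then x q else 0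
  set y : Fin N → ℝ := fun q => max (min (xt q) 1) 0
  have hxt : ‖xt‖ ≤ ‖x‖ := (pi_norm_le_iff_of_nonneg (norm_nonneg x)).2 fun q => by
    simp only [xt]; split_ifs
    · exact norm_le_pi_norm x q
    · simp
  have hy : ‖y‖ ≤ 1 := (pi_norm_le_iff_of_nonneg zero_le_one).2 fun q => by
    simp only [y, Real.norm_eq_abs]
    rw [abs_of_nonneg (le_max_right _ _)]
    exact max_le (min_le_right _ _) zero_le_one
  have hdist : ‖xt - y‖ ≤ s := (pi_norm_le_iff_of_nonneg hs).2 fun q => by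
    simp only [xt, y, Pi.sub_apply, Real.norm_eq_abs]
    split_ifs with hq
    · obtain ⟨h1, h2⟩ := hx q hq
      rw [abs_le, min_def, max_def]
      split_ifs <;> constructor <;> linarith
    · simpa using hs
  have hcongr : infection B Bi x i = infection B Bi xt i :=
    infection_apply_congr hBblock hBiblock (fun q hq => (if_pos hq).symm) hi
  have hy1 : infection B Bi y i ≤ infection B Bi 1 i :=
    infection_mono hB hBi (fun q => le_max_right _ _)
      (fun q => max_le (min_le_right _ _) zero_le_one) i
  have hlip := abs_infection_sub_le hB hBi xt y i
  have hF1 := infection_one_nonneg hB hBi i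
  have : infection B Bi 1 i * (1 + ‖xt‖ + ‖y‖) * ‖xt - y‖ ≤
      infection B Bi 1 i * (2 + ‖x‖) * s := by
    gcongr infection B Bi 1 i * ?_ * ?_
    linarith
  linarith [le_abs_self (infection B Bi xt i - infection B Bi y i)]

end InfectionBounds

theorem mul_le_of_le_slack {c F s A a M : ℝ} (hs : 0 ≤ s) (hcs : c ≤ s) (hcA : -A ≤ c)
    (hFa : -(a * s) ≤ F) (hFM : F ≤ M) (hA : 0 ≤ A) (ha : 0 ≤ a) (hM : 0 ≤ M) :
    c * F ≤ (M + A * a) * s := by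
  rcases le_total 0 F with hF | hF
  · nlinarith [mul_le_mul_of_nonneg_right hcs hF, mul_le_mul_of_nonneg_left hFM hs,
      mul_nonneg (mul_nonneg hA ha) hs]
  · nlinarith [mul_le_mul_of_nonneg_right hcA (neg_nonneg.2 hF),
      mul_le_mul_of_nonneg_left (neg_le.1 hFa) hA, mul_nonneg hM hs]

section Slope

variable {n N : ℕ} {D B : Matrix (Fin N) (Fin N) ℝ} {Bi : Fin N → Matrix (Fin N) (Fin N) ℝ}

-- `(2 + 3K)^2` dominates each of the polynomial factors in `K` met in the estimates below.
def slopeBound (D B : Matrix (Fin N) (Fin N) ℝ) (Bi : Fin N → Matrix (Fin N) (Fin N) ℝ)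
    (K : ℝ) : ℝ :=
  ∑ i, (D i i + infection B Bi 1 i * (2 + 3 * K) ^ 2)

theorem ModelHyp.le_slopeBound (hmod : ModelHyp n D B Bi) (K : ℝ) (i : Fin N) :
    D i i + infection B Bi 1 i * (2 + 3 * K) ^ 2 ≤ slopeBound D B Bi K :=
  single_le_sum (f := fun i => D i i + infection B Bi 1 i * (2 + 3 * K) ^ 2)
    (fun j _ => add_nonneg (hmod.dPos j).le
      (mul_nonneg (infection_one_nonneg hmod.bNonneg hmod.bfiNonneg j) (sq_nonneg _)))
    (mem_univ i)

variable {x xo : Fin N → ℝ} {K s : ℝ} {i : Fin N}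

theorem ModelHyp.mul_infection_le (hmod : ModelHyp n D B Bi) (hxK : ‖x‖ ≤ K) (hs : 0 ≤ s)
    (hx : ∀ q, -s ≤ x q) {c : ℝ} (hcs : c ≤ s) (hcK : -(1 + 2 * K) ≤ c) :
    c * infection B Bi x i ≤ infection B Bi 1 i * (2 + 3 * K) ^ 2 * s := by
  have hK : 0 ≤ K := (norm_nonneg x).trans hxK
  have hFa : -(infection B Bi 1 i * (1 + 2 * K) * s) ≤ infection B Bi x i := by
    refine le_trans ?_ (neg_le_infection hmod.bNonneg hmod.bfiNonneg hs hx i)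
    gcongr
    exact infection_one_nonneg hmod.bNonneg hmod.bfiNonneg i
  have hFM : infection B Bi x i ≤ infection B Bi 1 i * (1 + K) * K := by
    refine (le_abs_self _).trans ((abs_infection_le hmod.bNonneg hmod.bfiNonneg x i).trans ?_)
    have := infection_one_nonneg hmod.bNonneg hmod.bfiNonneg i
    gcongr
  have hF1 := infection_one_nonneg hmod.bNonneg hmod.bfiNonneg i
  refine (mul_le_of_le_slack hs hcs hcK hFa hFM (by linarith) (by positivity)
    (by positivity)).trans ?_
  gcongr
  nlinarith

theorem ModelHyp.neg_GBi_le_of_neg (hmod : ModelHyp n D B Bi) (hxK : ‖x‖ ≤ K)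
    (hxoK : ‖xo‖ ≤ K) (hs : 0 ≤ s) (hx : ∀ q, -s ≤ x q)
    (hsum : (i : ℕ) < n → x i + xo i ≤ 1 + s) (hneg : x i < 0) :
    -GBi n D B Bi x xo i ≤ slopeBound D B Bi K * s := by
  have hK : 0 ≤ K := (norm_nonneg x).trans hxK
  have hxi := abs_le.1 ((norm_le_pi_norm x i).trans hxK)
  have hxoi := abs_le.1 ((norm_le_pi_norm xo i).trans hxoK)
  have hbound := mul_le_mul_of_nonneg_right (hmod.le_slopeBound K i) hs
  have hDx : D i i * x i ≤ 0 := mul_nonpos_of_nonneg_of_nonpos (hmod.dPos i).le hneg.le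
  have hDs : 0 ≤ D i i * s := mul_nonneg (hmod.dPos i).le hs
  rcases lt_or_ge (i : ℕ) n with hi | hi
  · rw [GBi_apply_of_lt hmod.dDiag _ _ hi]
    have := hmod.mul_infection_le (i := i) (c := x i + xo i - 1) hxK hs hx (by linarith [hsum hi])
      (by linarith)
    nlinarith
  · rw [GBi_apply_of_le hmod.dDiag _ _ hi]
    have := hmod.mul_infection_le (i := i) (c := -1) hxK hs hx (by linarith) (by linarith)
    nlinarith

theorem ModelHyp.GBi_le_of_ubound_lt (hmod : ModelHyp n D B Bi) (hxK : ‖x‖ ≤ K)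
    (hxoK : ‖xo‖ ≤ K) (hs : 0 ≤ s) (hx : ∀ q, -s ≤ x q ∧ x q ≤ ubound n D B Bi q + s)
    (hxo : -s ≤ xo i) (hup : ubound n D B Bi i < x i) :
    GBi n D B Bi x xo i ≤ slopeBound D B Bi K * s := by
  have hK : 0 ≤ K := (norm_nonneg x).trans hxK
  have hxi := abs_le.1 ((norm_le_pi_norm x i).trans hxK)
  have hxoi := abs_le.1 ((norm_le_pi_norm xo i).trans hxoK)
  have hbound := mul_le_mul_of_nonneg_right (hmod.le_slopeBound K i) hs
  have hDs : 0 ≤ D i i * s := mul_nonneg (hmod.dPos i).le hs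
  have hDx := mul_le_mul_of_nonneg_left hup.le (hmod.dPos i).le
  rcases lt_or_ge (i : ℕ) n with hi | hi
  · rw [GBi_apply_of_lt hmod.dDiag _ _ hi]
    rw [ubound_of_lt hi] at hup hDx
    have := hmod.mul_infection_le (i := i) (c := 1 - x i - xo i) hxK hs (fun q => (hx q).1)
      (by linarith) (by linarith)
    nlinarith
  · rw [GBi_apply_of_le hmod.dDiag _ _ hi]
    rw [mul_ubound_of_le (hmod.dPos i) hi] at hDx
    have hF := infection_le_of_le_one_add hmod.bNonneg hmod.bfiNonneg hmod.bBlock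
      hmod.bfiBlock2 hs (fun q hq => by simpa [ubound_of_lt hq] using hx q) hi
    have hF1 := infection_one_nonneg hmod.bNonneg hmod.bfiNonneg i
    have : infection B Bi 1 i * (2 + ‖x‖) * s ≤ infection B Bi 1 i * (2 + 3 * K) ^ 2 * s := by
      gcongr infection B Bi 1 i * ?_ * s
      nlinarith
    nlinarith

theorem ModelHyp.GBi_le_of_one_lt_add (hmod : ModelHyp n D B Bi) (hxK : ‖x‖ ≤ K)
    (hxoK : ‖xo‖ ≤ K) (hs : 0 ≤ s) (hx : ∀ q, -s ≤ x q) (hi : (i : ℕ) < n)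
    (hsum : 1 < x i + xo i) :
    GBi n D B Bi x xo i ≤ slopeBound D B Bi K * s := by
  have hxi := abs_le.1 ((norm_le_pi_norm x i).trans hxK)
  have hxoi := abs_le.1 ((norm_le_pi_norm xo i).trans hxoK)
  have hbound := mul_le_mul_of_nonneg_right (hmod.le_slopeBound K i) hs
  have hDx := mul_le_mul_of_nonneg_left (neg_le.1 (hx i)) (hmod.dPos i).le
  rw [GBi_apply_of_lt hmod.dDiag _ _ hi]
  have := hmod.mul_infection_le (i := i) (c := 1 - x i - xo i) hxK hs hx (by linarith) (by linarith)
  nlinarith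

theorem ModelHyp.GBi_sub_Gfield_le (hmod : ModelHyp n D B Bi) {y : Fin N → ℝ} (hxK : ‖x‖ ≤ K)
    (hyK : ‖y‖ ≤ K) (hs : 0 ≤ s) (hx : 0 ≤ x) (hxo : 0 ≤ xo i)
    (hsum : (i : ℕ) < n → x i + xo i ≤ 1) (hy : 0 ≤ y i) (hxy : ∀ q, x q - y q ≤ s)
    (hlt : y i < x i) :
    GBi n D B Bi x xo i - Gfield n D B Bi y i ≤ slopeBound D B Bi K * s := by
  have hK : 0 ≤ K := (norm_nonneg x).trans hxK
  have hbound := mul_le_mul_of_nonneg_right (hmod.le_slopeBound K i) hs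
  have hDs : 0 ≤ D i i * s := mul_nonneg (hmod.dPos i).le hs
  have hDxy := mul_le_mul_of_nonneg_left hlt.le (hmod.dPos i).le
  have hFx := infection_nonneg hmod.bNonneg hmod.bfiNonneg hx i
  have hF1 := infection_one_nonneg hmod.bNonneg hmod.bfiNonneg i
  have hdiff : infection B Bi x i - infection B Bi y i ≤
      infection B Bi 1 i * (2 + 3 * K) ^ 2 * s := by
    refine (infection_sub_le hmod.bNonneg hmod.bfiNonneg hx hs hxy i).trans ?_
    gcongr infection B Bi 1 i * ?_ * s
    nlinarith
  have hdiff_nonneg : 0 ≤ infection B Bi 1 i * (2 + 3 * K) ^ 2 * s := by positivity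
  rw [Gfield_eq_GBi_zero]
  rcases lt_or_ge (i : ℕ) n with hi | hi
  · rw [GBi_apply_of_lt hmod.dDiag _ _ hi, GBi_apply_of_lt hmod.dDiag _ _ hi, Pi.zero_apply,
      sub_zero]
    have := hsum hi
    have hc : (1 - x i - xo i) * infection B Bi x i ≤ (1 - y i) * infection B Bi x i :=
      mul_le_mul_of_nonneg_right (by linarith) hFx
    rcases le_total 0 (infection B Bi x i - infection B Bi y i) with hd | hd
    · nlinarith
    · nlinarith
  · rw [GBi_apply_of_le hmod.dDiag _ _ hi, GBi_apply_of_le hmod.dDiag _ _ hi]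
    nlinarith

end Slope

theorem ModelHyp.slopeBound_nonneg {n N : ℕ} {D B : Matrix (Fin N) (Fin N) ℝ}
    {Bi : Fin N → Matrix (Fin N) (Fin N) ℝ} (hmod : ModelHyp n D B Bi) (K : ℝ) :
    0 ≤ slopeBound D B Bi K :=
  sum_nonneg fun i _ => add_nonneg (hmod.dPos i).le
    (mul_nonneg (infection_one_nonneg hmod.bNonneg hmod.bfiNonneg i) (sq_nonneg _))

theorem exists_norm_le_of_hasDerivAt {E : Type*} [NormedAddCommGroup E] [NormedSpace ℝ E]
    {z : ℝ → E} {z' : ℝ → E} (hz : ∀ t, 0 ≤ t → HasDerivAt z (z' t) t) (T : ℝ) :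
    ∃ K, ∀ t ∈ Set.Icc 0 T, ‖z t‖ ≤ K :=
  isCompact_Icc.exists_bound_of_continuousOn fun t ht =>
    (hz t ht.1).continuousAt.continuousWithinAt

section Invariance

variable {n N : ℕ}

def boxConstraint (u x : Fin N → ℝ) : Bool × Fin N → ℝ
  | (false, q) => -x q
  | (true, q) => x q - u q

-- With the upper bounds as `u1 u2` and `c = 1` these constraints cut out `D̄_bi`; with zero
-- offsets they are their linear parts, hence their derivatives along a curve.
def biConstraint (n : ℕ) (u1 u2 : Fin N → ℝ) (c : ℝ) (x1 x2 : Fin N → ℝ) :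
    (Bool × Fin N) ⊕ (Bool × Fin N) ⊕ {q : Fin N // (q : ℕ) < n} → ℝ
  | .inl k => boxConstraint u1 x1 k
  | .inr (.inl k) => boxConstraint u2 x2 k
  | .inr (.inr q) => x1 q + x2 q - c

theorem boxConstraint_le_iff {u x : Fin N → ℝ} {s : ℝ} :
    (∀ k, boxConstraint u x k ≤ s) ↔ ∀ q, -s ≤ x q ∧ x q ≤ u q + s := by
  simp [boxConstraint, neg_le, add_comm, forall_and]

theorem biConstraint_le_iff {u1 u2 x1 x2 : Fin N → ℝ} {s : ℝ} :
    (∀ k, biConstraint n u1 u2 1 x1 x2 k ≤ s) ↔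
      (∀ q, -s ≤ x1 q ∧ x1 q ≤ u1 q + s) ∧ (∀ q, -s ≤ x2 q ∧ x2 q ≤ u2 q + s) ∧
        ∀ q : Fin N, (q : ℕ) < n → x1 q + x2 q ≤ 1 + s := by
  simp only [Sum.forall, biConstraint, boxConstraint_le_iff, Subtype.forall]
  exact and_congr_right' (and_congr_right' (forall₂_congr fun q _ => by
    constructor <;> intro h <;> linarith))

theorem inDbarBi_iff_biConstraint_nonpos {D1 B1 D2 B2 : Matrix (Fin N) (Fin N) ℝ}
    {Bi1 Bi2 : Fin N → Matrix (Fin N) (Fin N) ℝ} {x1 x2 : Fin N → ℝ} :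
    InDbarBi n D1 B1 Bi1 D2 B2 Bi2 x1 x2 ↔
      ∀ k, biConstraint n (ubound n D1 B1 Bi1) (ubound n D2 B2 Bi2) 1 x1 x2 k ≤ 0 := by
  rw [biConstraint_le_iff]
  simp [InDbarBi, Dbar]

theorem hasDerivAt_biConstraint {u1 u2 : Fin N → ℝ} {c : ℝ} {z1 z2 : ℝ → Fin N → ℝ}
    {z1' z2' : Fin N → ℝ} {t : ℝ} (h1 : HasDerivAt z1 z1' t) (h2 : HasDerivAt z2 z2' t) (k) :
    HasDerivAt (fun t => biConstraint n u1 u2 c (z1 t) (z2 t) k)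
      (biConstraint n 0 0 0 z1' z2' k) t := by
  have h1 := hasDerivAt_pi.1 h1
  have h2 := hasDerivAt_pi.1 h2
  rcases k with ⟨_ | _, q⟩ | ⟨_ | _, q⟩ | ⟨q, _⟩ <;>
    simp only [biConstraint, boxConstraint, Pi.zero_apply, sub_zero]
  · exact (h1 q).neg
  · exact (h1 q).sub_const (u1 q)
  · exact (h2 q).neg
  · exact (h2 q).sub_const (u2 q)
  · exact ((h1 q).add (h2 q)).sub_const c

variable {D1 B1 D2 B2 : Matrix (Fin N) (Fin N) ℝ} {Bi1 Bi2 : Fin N → Matrix (Fin N) (Fin N) ℝ}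

theorem biConstraint_slope_le (hmod1 : ModelHyp n D1 B1 Bi1) (hmod2 : ModelHyp n D2 B2 Bi2)
    {x1 x2 : Fin N → ℝ} {K s : ℝ} (hK1 : ‖x1‖ ≤ K) (hK2 : ‖x2‖ ≤ K) (hs : 0 ≤ s)
    (hslack : ∀ j, biConstraint n (ubound n D1 B1 Bi1) (ubound n D2 B2 Bi2) 1 x1 x2 j ≤ s)
    {k} (hk : 0 < biConstraint n (ubound n D1 B1 Bi1) (ubound n D2 B2 Bi2) 1 x1 x2 k) :
    biConstraint n 0 0 0 (GBi n D1 B1 Bi1 x1 x2) (GBi n D2 B2 Bi2 x2 x1) k ≤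
      (slopeBound D1 B1 Bi1 K + slopeBound D2 B2 Bi2 K) * s := by
  obtain ⟨h1, h2, hsum⟩ := biConstraint_le_iff.1 hslack
  have hC1 := mul_nonneg (hmod1.slopeBound_nonneg K) hs
  have hC2 := mul_nonneg (hmod2.slopeBound_nonneg K) hs
  rcases k with ⟨_ | _, q⟩ | ⟨_ | _, q⟩ | ⟨q, hq⟩ <;>
    simp only [biConstraint, boxConstraint, Pi.zero_apply, sub_zero] at hk ⊢
  · have := hmod1.neg_GBi_le_of_neg hK1 hK2 hs (fun q => (h1 q).1) (hsum q) (by linarith)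
    linarith
  · have := hmod1.GBi_le_of_ubound_lt hK1 hK2 hs h1 (h2 q).1 (by linarith)
    linarith
  · have := hmod2.neg_GBi_le_of_neg hK2 hK1 hs (fun q => (h2 q).1)
      (fun hq => by linarith [hsum q hq]) (by linarith)
    linarith
  · have := hmod2.GBi_le_of_ubound_lt hK2 hK1 hs h2 (h1 q).1 (by linarith)
    linarith
  · have := hmod1.GBi_le_of_one_lt_add hK1 hK2 hs (fun q => (h1 q).1) hq (by linarith)
    have := hmod2.GBi_le_of_one_lt_add hK2 hK1 hs (fun q => (h2 q).1) hq (by linarith)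
    linarith

theorem inDbarBi_of_isSolutionBi (hmod1 : ModelHyp n D1 B1 Bi1) (hmod2 : ModelHyp n D2 B2 Bi2)
    {z1 z2 : ℝ → Fin N → ℝ} (hsol : IsSolutionBi n D1 B1 Bi1 D2 B2 Bi2 z1 z2)
    (hinit : InDbarBi n D1 B1 Bi1 D2 B2 Bi2 (z1 0) (z2 0)) :
    ∀ t, 0 ≤ t → InDbarBi n D1 B1 Bi1 D2 B2 Bi2 (z1 t) (z2 t) := by
  have key := nonpos_of_hasDerivAt_of_slope
    (g := fun k t => biConstraint n (ubound n D1 B1 Bi1) (ubound n D2 B2 Bi2) 1 (z1 t) (z2 t) k)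
    (fun k t ht => hasDerivAt_biConstraint (hsol t ht).1 (hsol t ht).2 k)
    (inDbarBi_iff_biConstraint_nonpos.1 hinit) fun T => ?_
  · exact fun t ht => inDbarBi_iff_biConstraint_nonpos.2 (key t ht)
  obtain ⟨K1, hK1⟩ := exists_norm_le_of_hasDerivAt (fun t ht => (hsol t ht).1) T
  obtain ⟨K2, hK2⟩ := exists_norm_le_of_hasDerivAt (fun t ht => (hsol t ht).2) T
  exact ⟨slopeBound D1 B1 Bi1 (max K1 K2) + slopeBound D2 B2 Bi2 (max K1 K2),
    fun t ht s hs hslack k hk => biConstraint_slope_le hmod1 hmod2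
      ((hK1 t ht).trans (le_max_left _ _)) ((hK2 t ht).trans (le_max_right _ _)) hs hslack hk⟩

end Invariance

section Comparison

variable {n N : ℕ} {D1 B1 D2 B2 : Matrix (Fin N) (Fin N) ℝ}
  {Bi1 Bi2 : Fin N → Matrix (Fin N) (Fin N) ℝ} {z1 z2 : ℝ → Fin N → ℝ}

theorem IsSolutionBi.swap (hsol : IsSolutionBi n D1 B1 Bi1 D2 B2 Bi2 z1 z2) :
    IsSolutionBi n D2 B2 Bi2 D1 B1 Bi1 z2 z1 :=
  fun t ht => (hsol t ht).symm

theorem InDbarBi.swap {x1 x2 : Fin N → ℝ} (h : InDbarBi n D1 B1 Bi1 D2 B2 Bi2 x1 x2) :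
    InDbarBi n D2 B2 Bi2 D1 B1 Bi1 x2 x1 :=
  ⟨h.2.1, h.1, fun i hi => (add_comm _ _).trans_le (h.2.2 i hi)⟩

theorem le_of_isSolution_of_isSolutionBi (hmod1 : ModelHyp n D1 B1 Bi1)
    (hmod2 : ModelHyp n D2 B2 Bi2) (hsol : IsSolutionBi n D1 B1 Bi1 D2 B2 Bi2 z1 z2)
    (hinit : InDbarBi n D1 B1 Bi1 D2 B2 Bi2 (z1 0) (z2 0)) {zh : ℝ → Fin N → ℝ}
    (hzh : IsSolution (Gfield n D1 B1 Bi1) zh) (h0 : zh 0 = z1 0) :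
    ∀ t, 0 ≤ t → ∀ i, z1 t i ≤ zh t i := by
  have hz := inDbarBi_of_isSolutionBi hmod1 hmod2 hsol hinit
  -- `(zh, 0)` is a solution of the bi-virus system, so `zh` stays in `D̄` as well
  have hzh' : ∀ t, 0 ≤ t → zh t ∈ Dbar n D1 B1 Bi1 := by
    refine fun t ht => (inDbarBi_of_isSolutionBi hmod1 hmod2 (z2 := fun _ => 0) (fun t ht => ?_)
      ?_ t ht).1
    · rw [← Gfield_eq_GBi_zero, GBi_zero_left]
      exact ⟨hzh t ht, hasDerivAt_const t 0⟩
    · refine ⟨h0 ▸ hinit.1, fun i => ⟨le_rfl, hmod2.ubound_nonneg i⟩, fun i hi => ?_⟩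
      simpa [h0, ubound_of_lt hi] using (hinit.1 i).2
  have key := nonpos_of_hasDerivAt_of_slope (g := fun i t => z1 t i - zh t i)
    (fun i t ht => (hasDerivAt_pi.1 (hsol t ht).1 i).sub (hasDerivAt_pi.1 (hzh t ht) i))
    (fun i => by simp [h0]) fun T => ?_
  · exact fun t ht i => sub_nonpos.1 (key t ht i)
  obtain ⟨K1, hK1⟩ := exists_norm_le_of_hasDerivAt (fun t ht => (hsol t ht).1) T
  obtain ⟨K2, hK2⟩ := exists_norm_le_of_hasDerivAt hzh T
  refine ⟨slopeBound D1 B1 Bi1 (max K1 K2), fun t ht s hs hslack i hi => ?_⟩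
  obtain ⟨hz1, hz2, hsum⟩ := hz t ht.1
  exact hmod1.GBi_sub_Gfield_le ((hK1 t ht).trans (le_max_left _ _))
    ((hK2 t ht).trans (le_max_right _ _)) hs (fun q => (hz1 q).1) (hz2 i).1 (hsum i)
    (hzh' t ht.1 i).1 hslack (sub_pos.1 hi)

end Comparison

theorem stmt10_general (n m : ℕ)
    (Df1 Bf1 : Matrix (Fin (n + m)) (Fin (n + m)) ℝ)
    (Bfi1 : Fin (n + m) → Matrix (Fin (n + m)) (Fin (n + m)) ℝ)
    (Df2 Bf2 : Matrix (Fin (n + m)) (Fin (n + m)) ℝ)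
    (Bfi2 : Fin (n + m) → Matrix (Fin (n + m)) (Fin (n + m)) ℝ)
    (hmod1 : ModelHyp n Df1 Bf1 Bfi1) (hmod2 : ModelHyp n Df2 Bf2 Bfi2) :
    (∀ z1 z2 : ℝ → Fin (n + m) → ℝ,
        IsSolutionBi n Df1 Bf1 Bfi1 Df2 Bf2 Bfi2 z1 z2 →
        InDbarBi n Df1 Bf1 Bfi1 Df2 Bf2 Bfi2 (z1 0) (z2 0) →
        ∀ t : ℝ, 0 ≤ t → InDbarBi n Df1 Bf1 Bfi1 Df2 Bf2 Bfi2 (z1 t) (z2 t)) ∧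
    (GBi n Df1 Bf1 Bfi1 0 0 = 0 ∧ GBi n Df2 Bf2 Bfi2 0 0 = 0) ∧
    (∀ z1 z2 : ℝ → Fin (n + m) → ℝ,
        IsSolutionBi n Df1 Bf1 Bfi1 Df2 Bf2 Bfi2 z1 z2 →
        InDbarBi n Df1 Bf1 Bfi1 Df2 Bf2 Bfi2 (z1 0) (z2 0) →
        (∀ zh : ℝ → Fin (n + m) → ℝ, IsSolution (Gfield n Df1 Bf1 Bfi1) zh →
          zh 0 = z1 0 → ∀ t : ℝ, 0 ≤ t → ∀ i, z1 t i ≤ zh t i) ∧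
        (∀ zh : ℝ → Fin (n + m) → ℝ, IsSolution (Gfield n Df2 Bf2 Bfi2) zh →
          zh 0 = z2 0 → ∀ t : ℝ, 0 ≤ t → ∀ i, z2 t i ≤ zh t i)) :=
  ⟨fun _ _ hsol hinit => inDbarBi_of_isSolutionBi hmod1 hmod2 hsol hinit,
    ⟨GBi_zero_left 0, GBi_zero_left 0⟩,
    fun _ _ hsol hinit =>
      ⟨fun _ hzh h0 => le_of_isSolution_of_isSolutionBi hmod1 hmod2 hsol hinit hzh h0,
        fun _ hzh h0 => le_of_isSolution_of_isSolutionBi hmod2 hmod1 hsol.swap hinit.swap hzh h0⟩⟩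

/-- general properties of the bi-virus higher-order SIWS model:
(i) `D̄_bi` is positively invariant; (ii) `(0,0)` is an equilibrium;
(iii) each virus is upper bounded by its single-virus counterpart. -/
theorem stmt10 (n m : ℕ) (hn : 0 < n)
    (Df1 Bf1 : Matrix (Fin (n + m)) (Fin (n + m)) ℝ)
    (Bfi1 : Fin (n + m) → Matrix (Fin (n + m)) (Fin (n + m)) ℝ)
    (Df2 Bf2 : Matrix (Fin (n + m)) (Fin (n + m)) ℝ)
    (Bfi2 : Fin (n + m) → Matrix (Fin (n + m)) (Fin (n + m)) ℝ)
    (hmod1 : ModelHyp n Df1 Bf1 Bfi1) (hmod2 : ModelHyp n Df2 Bf2 Bfi2) :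
    (∀ z1 z2 : ℝ → Fin (n + m) → ℝ,
        IsSolutionBi n Df1 Bf1 Bfi1 Df2 Bf2 Bfi2 z1 z2 →
        InDbarBi n Df1 Bf1 Bfi1 Df2 Bf2 Bfi2 (z1 0) (z2 0) →
        ∀ t : ℝ, 0 ≤ t → InDbarBi n Df1 Bf1 Bfi1 Df2 Bf2 Bfi2 (z1 t) (z2 t)) ∧
    (GBi n Df1 Bf1 Bfi1 0 0 = 0 ∧ GBi n Df2 Bf2 Bfi2 0 0 = 0) ∧
    (∀ z1 z2 : ℝ → Fin (n + m) → ℝ,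
        IsSolutionBi n Df1 Bf1 Bfi1 Df2 Bf2 Bfi2 z1 z2 →
        InDbarBi n Df1 Bf1 Bfi1 Df2 Bf2 Bfi2 (z1 0) (z2 0) →
        (∀ zh : ℝ → Fin (n + m) → ℝ, IsSolution (Gfield n Df1 Bf1 Bfi1) zh →
          zh 0 = z1 0 → ∀ t : ℝ, 0 ≤ t → ∀ i, z1 t i ≤ zh t i) ∧
        (∀ zh : ℝ → Fin (n + m) → ℝ, IsSolution (Gfield n Df2 Bf2 Bfi2) zh →
          zh 0 = z2 0 → ∀ t : ℝ, 0 ≤ t → ∀ i, z2 t i ≤ zh t i)) :=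
  stmt10_general n m Df1 Bf1 Bfi1 Df2 Bf2 Bfi2 hmod1 hmod2
end
end
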